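/- arXiv:1307.5528 — 4 statements merged into one kernel-verified Lean document; each statement's English description precedes it below -/
import Mathlib

section
/- Let p and q be projections in a *-ring with (1-p)q Moore-Penrose invertible. Then ((1-p)q)† = q((1-p)q(1-p))†. -/
/-!
Write `a = (1 - p) q`, so that `a a* = (1 - p) q (1 - p)` and `a* = q (1 - p)`. If `c = a†`, the
four Penrose equations show that `c* c` is a Moore-Penrose inverse of `a a*`, hence `d = c* c` by
uniqueness, and `c = (c a) c = (c a)* c = a* c* c = q (1 - p) d`. Finally `c p = c c* a* p = 0`
because `a* p = 0`, so `p d = (c p)* c = 0` and `c = q d`.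
-/

variable {R : Type*} [Ring R] [StarRing R]

/-- `b` is a Moore-Penrose inverse of `a`. -/
def IsMP (a b : R) : Prop :=
  a * b * a = a ∧ b * a * b = b ∧ star (a * b) = a * b ∧ star (b * a) = b * a

/-- `p` is a projection: self-adjoint idempotent. -/
def IsProj (p : R) : Prop := p * p = p ∧ star p = p

/-- The right ideal `aR`. -/
def rid (a : R) : Set R := {x | ∃ r, x = a * r}

/-- Elementwise sum of two subsets. -/
def sid (A B : Set R) : Set R := {z | ∃ x ∈ A, ∃ y ∈ B, z = x + y}

namespace IsMP

variable {a b c : R}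

theorem unique (hb : IsMP a b) (hc : IsMP a c) : b = c := by
  obtain ⟨hb1, hb2, hb3, hb4⟩ := hb
  obtain ⟨hc1, hc2, hc3, hc4⟩ := hc
  have hb_eq : b = b * a * c := by
    calc b = b * star (a * b) := by rw [hb3, ← mul_assoc, hb2]
      _ = b * star (a * c * a * b) := by rw [hc1]
      _ = b * star (a * b) * star (a * c) := by simp only [star_mul, mul_assoc]
      _ = b * a * c := by rw [hb3, hc3]; simp only [← mul_assoc, hb2]
  have hc_eq : c = b * a * c := by
    calc c = star (c * a) * c := by rw [hc4, hc2]
      _ = star (c * (a * b * a)) * c := by rw [hb1]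
      _ = star (b * a) * star (c * a) * c := by simp only [star_mul, mul_assoc]
      _ = b * a * c := by
        rw [hb4, hc4]
        simp only [mul_assoc] at hc2 ⊢
        rw [hc2]
  rw [hb_eq, ← hc_eq]

theorem eq_star_mul_star_mul (hc : IsMP a c) : c = star a * (star c * c) := by
  obtain ⟨-, h2, -, h4⟩ := hc
  rw [← mul_assoc, ← star_mul, h4, h2]

theorem eq_mul_star_mul_star (hc : IsMP a c) : c = c * star c * star a := by
  obtain ⟨-, h2, h3, -⟩ := hc
  rw [mul_assoc, ← star_mul, h3, ← mul_assoc, h2]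

theorem mul_eq_zero_of_star_mul_eq_zero (hc : IsMP a c) {y : R} (hy : star a * y = 0) :
    c * y = 0 := by
  rw [hc.eq_mul_star_mul_star, mul_assoc, hy, mul_zero]

/-- `(a a*)† = (a*)† a†`. -/
theorem mul_star_self (hc : IsMP a c) : IsMP (a * star a) (star c * c) := by
  obtain ⟨h1, h2, h3, h4⟩ := hc
  have hef : a * star a * (star c * c) = a * c := by
    rw [mul_assoc, ← mul_assoc (star a), ← star_mul, h4, h2]
  have hfe : star c * c * (a * star a) = a * c := by
    rw [← h3, ← hef, star_mul, star_mul, star_mul, star_star, star_star]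
  refine ⟨?_, ?_, ?_, ?_⟩
  · rw [hef, ← mul_assoc, h1]
  · rw [mul_assoc, hef, mul_assoc (star c), ← mul_assoc c, h2]
  · rw [hef, h3]
  · rw [hfe, h3]

end IsMP

theorem IsProj.star_one_sub {p : R} (hp : IsProj p) : star (1 - p) = 1 - p := by
  rw [star_sub, star_one, hp.2]

theorem IsProj.one_sub_mul_self {p : R} (hp : IsProj p) : (1 - p) * p = 0 := by
  rw [sub_mul, one_mul, hp.1, sub_self]

theorem stmt7 (p q c d : R) (hp : IsProj p) (hq : IsProj q)
    (hc : IsMP ((1 - p) * q) c) (hd : IsMP ((1 - p) * q * (1 - p)) d) :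
    c = q * d := by
  have hstar : star ((1 - p) * q) = q * (1 - p) := by rw [star_mul, hq.2, hp.star_one_sub]
  have hself : (1 - p) * q * star ((1 - p) * q) = (1 - p) * q * (1 - p) := by
    rw [hstar, mul_assoc, ← mul_assoc q, hq.1, ← mul_assoc]
  have hd_eq : star c * c = d := (hself ▸ hc.mul_star_self).unique hd
  have hcp : c * p = 0 :=
    hc.mul_eq_zero_of_star_mul_eq_zero (by rw [hstar, mul_assoc, hp.one_sub_mul_self, mul_zero])
  have hpd : p * d = 0 := by
    rw [← hd_eq, ← mul_assoc, ← star_star p, ← star_mul, hp.2, hcp, star_zero, zero_mul]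
  calc c = q * (1 - p) * d := by rw [← hstar, ← hd_eq, ← hc.eq_star_mul_star_mul]
    _ = q * d := by rw [mul_assoc, sub_mul, one_mul, hpd, sub_zero]
end

section
/- Let p and q be projections in a *-reducing ring R such that 1 - pq is Moore-Penrose invertible and pR ∩ qR = {0}. Then 1 - pq is invertible and ((1-q)p)† = (1-pq)^{-1} p(1-q), with ((1-q)p)† R = pR. -/
/-!
The whole argument rests on one fact: in a `*`-reducing ring, `pR ∩ qR = 0` makes `1 - pq`
left regular. Indeed, if `(1 - pq) g = 0` then `g = pqg ∈ pR`, and with `a = (1 - q)p` one has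
`a* a g = (1 - pq) p g = 0`, hence `a g = (1 - q) g = 0`, so `g ∈ qR` as well. Applied to `(p, q)`
and to `(q, p)`, this shows that both `1 - pq` and its adjoint `1 - qp` are left regular, so the
inner inverse `(1 - pq)†` is a two-sided inverse. Finally `a* a = (1 - pq) p` and `d = pd` for
`d = a†` give `(1 - pq) d = a* a d = a*` and `d a = (1 - pq)⁻¹ a* a = p`.
-/

variable {R : Type*} [Ring R] [StarRing R]

theorem mul_eq_zero_of_star_mul_self_mul_eq_zero (hred : ∀ a : R, star a * a = 0 → a = 0)
    {a x : R} (h : star a * a * x = 0) : a * x = 0 :=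
  hred _ <| by rw [star_mul, mul_assoc, ← mul_assoc (star a), h, mul_zero]

theorem isUnit_of_mul_mul_eq_self {a b : R} (ha : IsLeftRegular a)
    (hsa : IsLeftRegular (star a)) (h : a * b * a = a) : IsUnit a := by
  have hba : b * a = 1 := ha <| by simp only [← mul_assoc, h, mul_one]
  have hab : a * b = 1 := by
    have : star (a * b) = 1 := hsa <| by simp only [← star_mul, h, mul_one]
    rwa [← star_one, star_inj] at this
  exact ⟨⟨a, b, hab, hba⟩, rfl⟩

omit [StarRing R] in
theorem rid_eq_rid_of_mul_eq {x y s t : R} (hs : y * s = x) (ht : x * t = y) :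
    rid x = rid y := by
  ext z
  constructor
  · rintro ⟨r, rfl⟩
    exact ⟨s * r, by rw [← mul_assoc, hs]⟩
  · rintro ⟨r, rfl⟩
    exact ⟨t * r, by rw [← mul_assoc, ht]⟩

namespace IsMP

variable {a d : R}

theorem eq_star_mul (h : IsMP a d) : d = star a * (star d * d) := by
  conv_lhs => rw [← h.2.1, ← h.2.2.2, star_mul]
  rw [mul_assoc]

theorem star_mul_mul (h : IsMP a d) : star a * (a * d) = star a := by
  conv_lhs => rw [← h.2.2.1, ← star_mul, h.1]

end IsMP

namespace IsProj

variable {p q : R}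

theorem star_one_sub_mul (hp : IsProj p) (hq : IsProj q) : star (1 - p * q) = 1 - q * p := by
  rw [star_sub, star_one, star_mul, hp.2, hq.2]

theorem star_one_sub_mul_self (hp : IsProj p) (hq : IsProj q) :
    star ((1 - q) * p) * ((1 - q) * p) = (1 - p * q) * p := by
  rw [star_mul, star_sub, star_one, hp.2, hq.2]
  calc p * (1 - q) * ((1 - q) * p) = p * p - p * q * p - p * q * p + p * (q * q) * p := by
        noncomm_ring
    _ = (1 - p * q) * p := by rw [hp.1, hq.1]; noncomm_ring

theorem isLeftRegular_one_sub_mul (hred : ∀ a : R, star a * a = 0 → a = 0)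
    (hp : IsProj p) (hq : IsProj q) (hint : rid p ∩ rid q = {0}) :
    IsLeftRegular (1 - p * q) := by
  refine isLeftRegular_iff_right_eq_zero_of_mul.mpr fun g hg => ?_
  have hg_pq : g = p * (q * g) := by
    rw [sub_mul, one_mul, sub_eq_zero, mul_assoc] at hg
    exact hg
  have hpg : p * g = g := by rw [hg_pq, ← mul_assoc, hp.1]
  have hqg : q * g = g := by
    have h : (1 - q) * p * g = 0 :=
      mul_eq_zero_of_star_mul_self_mul_eq_zero hred <| by
        rw [hp.star_one_sub_mul_self hq, mul_assoc, hpg, hg]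
    rw [mul_assoc, hpg, sub_mul, one_mul, sub_eq_zero] at h
    exact h.symm
  simpa using hint.subset ⟨⟨q * g, hg_pq⟩, ⟨g, hqg.symm⟩⟩

end IsProj

theorem stmt15 (hred : ∀ a : R, star a * a = 0 → a = 0)
    (p q c d : R) (hp : IsProj p) (hq : IsProj q)
    (hc : IsMP (1 - p * q) c) (hd : IsMP ((1 - q) * p) d)
    (hint : rid p ∩ rid q = {0}) :
    (∃ u : Rˣ, (u : R) = 1 - p * q ∧ d = (↑u⁻¹ : R) * (p * (1 - q))) ∧
    rid d = rid p := by
  set a := (1 - q) * p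
  have hsa : star a = p * (1 - q) := by rw [star_mul, star_sub, star_one, hp.2, hq.2]
  obtain ⟨u, hu⟩ : IsUnit (1 - p * q) :=
    isUnit_of_mul_mul_eq_self (hp.isLeftRegular_one_sub_mul hred hq hint)
      (by
        rw [hp.star_one_sub_mul hq]
        exact hq.isLeftRegular_one_sub_mul hred hp (by rwa [Set.inter_comm]))
      hc.1
  have hpd : p * d = d := by rw [hd.eq_star_mul, ← mul_assoc p, hsa, ← mul_assoc p p, hp.1]
  have hd_eq : d = ↑u⁻¹ * star a := by
    rw [Units.eq_inv_mul_iff_mul_eq]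
    calc ↑u * d = (1 - p * q) * p * d := by rw [hu, mul_assoc, hpd]
      _ = star a := by rw [← hp.star_one_sub_mul_self hq, mul_assoc, hd.star_mul_mul]
  have hda : d * a = p := by
    rw [hd_eq, mul_assoc, hp.star_one_sub_mul_self hq, ← hu, ← mul_assoc, Units.inv_mul, one_mul]
  exact ⟨⟨u, hu, hsa ▸ hd_eq⟩, rid_eq_rid_of_mul_eq hpd hda⟩
end

section
/- Let p and q be projections in a *-reducing ring R such that 1 - qp is Moore-Penrose invertible. Then (1-qp)†(1-q) and p(p+q-qp)† are idempotents. Moreover (1 - (1-qp)†(1-q))R = qR and (p(p+q-qp)†)R = pR. -/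
variable {R : Type*} [Ring R] [StarRing R]

/-!
If `c` is an inner inverse of `1 - qp`, i.e. `(1-qp)c(1-qp) = 1-qp`, then
`x = (1-p) - (1-p)c(1-p)` factors as `(1-q)p · c(1-p)` and satisfies `p x = 0`; hence
`x* x = (c(1-p))* p x = 0`, so `x = 0` in a *-reducing ring, i.e. `(1-p)c(1-p) = 1-p`.
Applied to `c*` (with `p, q` swapped) this gives `(1-q)c(1-q) = 1-q`, and applied to
`p + q - qp = 1 - (1-q)(1-p)` it gives `p e p = p`. Both idempotency claims and both equalities
of right ideals follow formally from these two identities.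
-/

lemma IsProj.isStarProjection {p : R} (hp : IsProj p) : IsStarProjection p :=
  isStarProjection_iff'.mpr hp

lemma star_mul_mul_star_of_mul_mul_eq {a c : R} (h : a * c * a = a) :
    star a * star c * star a = star a := by
  simpa only [star_mul, mul_assoc] using congrArg star h

omit [StarRing R] in
lemma rid_subset_rid_of_eq_mul {a b r : R} (h : a = b * r) : rid a ⊆ rid b := by
  rintro x ⟨s, rfl⟩
  exact ⟨r * s, by rw [h, mul_assoc]⟩

omit [StarRing R] in
lemma rid_mul_eq_of_mul_mul_eq {a c : R} (h : a * c * a = a) : rid (a * c) = rid a :=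
  (rid_subset_rid_of_eq_mul rfl).antisymm (rid_subset_rid_of_eq_mul h.symm)

omit [StarRing R] in
lemma rid_one_sub_mul_eq_of_mul_mul_eq {a c : R} (ha : IsIdempotentElem a)
    (h : a * c * a = a) : rid (1 - c * a) = rid (1 - a) := by
  have hleft : (1 - a) * (1 - c * a) = 1 - c * a := by
    calc (1 - a) * (1 - c * a) = 1 - c * a - (a - a * c * a) := by noncomm_ring
      _ = 1 - c * a := by rw [h, sub_self, sub_zero]
  have hright : (1 - c * a) * (1 - a) = 1 - a := by
    calc (1 - c * a) * (1 - a) = 1 - a - c * (a - a * a) := by noncomm_ring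
      _ = 1 - a := by rw [ha.eq, sub_self, mul_zero, sub_zero]
  exact (rid_subset_rid_of_eq_mul hleft.symm).antisymm (rid_subset_rid_of_eq_mul hright.symm)

lemma one_sub_mul_mul_one_sub_of_inner_inverse (hred : ∀ a : R, star a * a = 0 → a = 0)
    {p q c : R} (hp : IsStarProjection p) (hq : IsStarProjection q)
    (h : (1 - q * p) * c * (1 - q * p) = 1 - q * p) :
    (1 - p) * c * (1 - p) = 1 - p := by
  have hA : (1 - q * p) * (1 - p) = 1 - p := by
    rw [sub_mul, one_mul, mul_assoc, hp.mul_one_sub_self, mul_zero, sub_zero]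
  have hB : (1 - q * p) * c * (1 - p) = 1 - p := by
    calc (1 - q * p) * c * (1 - p) = (1 - q * p) * c * (1 - q * p) * (1 - p) := by
          rw [mul_assoc _ (1 - q * p), hA]
      _ = 1 - p := by rw [h, hA]
  set x := (1 - p) - (1 - p) * c * (1 - p) with hx_def
  have hx : x = (1 - q) * p * (c * (1 - p)) := by
    rw [hx_def]
    nth_rewrite 1 [← hB]
    noncomm_ring
  have hpx : p * x = 0 := by
    simp only [hx_def, mul_sub, ← mul_assoc, hp.mul_one_sub_self, zero_mul, sub_zero]
  have hm : star ((1 - q) * p) * ((1 - q) * p) = p * ((1 - q) * p) := by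
    rw [star_mul, hp.isSelfAdjoint.star_eq, hq.one_sub.isSelfAdjoint.star_eq, mul_assoc,
      ← mul_assoc (1 - q), hq.one_sub.isIdempotentElem.eq]
  have hxx : star x * x = star (c * (1 - p)) * (p * x) := by
    rw [hx, star_mul, mul_assoc, ← mul_assoc (star ((1 - q) * p)), hm, mul_assoc]
  exact (sub_eq_zero.mp (hred x (by rw [hxx, hpx, mul_zero]))).symm

theorem stmt17 (hred : ∀ a : R, star a * a = 0 → a = 0)
    (p q c e : R) (hp : IsProj p) (hq : IsProj q)
    (hc : IsMP (1 - q * p) c) (he : IsMP (p + q - q * p) e) :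
    (c * (1 - q)) * (c * (1 - q)) = c * (1 - q) ∧
    (p * e) * (p * e) = p * e ∧
    rid (1 - c * (1 - q)) = rid q ∧
    rid (p * e) = rid p := by
  have hp' := hp.isStarProjection
  have hq' := hq.isStarProjection
  have hqcq : (1 - q) * c * (1 - q) = 1 - q := by
    have hstar := star_mul_mul_star_of_mul_mul_eq hc.1
    rw [star_sub, star_one, star_mul, hp.2, hq.2] at hstar
    simpa only [star_sub, star_one, star_star, hq.2] using
      star_mul_mul_star_of_mul_mul_eq (one_sub_mul_mul_one_sub_of_inner_inverse hred hq' hp' hstar)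
  have hpep : p * e * p = p := by
    have he1 : (1 - (1 - q) * (1 - p)) * e * (1 - (1 - q) * (1 - p)) = 1 - (1 - q) * (1 - p) := by
      have hsum : p + q - q * p = 1 - (1 - q) * (1 - p) := by noncomm_ring
      exact hsum ▸ he.1
    simpa only [sub_sub_cancel] using
      one_sub_mul_mul_one_sub_of_inner_inverse hred hp'.one_sub hq'.one_sub he1
  refine ⟨?_, ?_, ?_, rid_mul_eq_of_mul_mul_eq hpep⟩
  · rw [mul_assoc, ← mul_assoc (1 - q), hqcq]
  · rw [← mul_assoc, hpep]
  · simpa only [sub_sub_cancel] using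
      rid_one_sub_mul_eq_of_mul_mul_eq hq'.one_sub.isIdempotentElem hqcq
end

section
/- Let p and q be projections in a *-reducing ring R such that 1 - qp is Moore-Penrose invertible. Then: (1) ((1-q)p)† = (1-qp)†(1-q) if and only if pR + qR = R; (2) ((1-q)p)† = p(p+q-qp)† if and only if pR ∩ qR = {0}; (3) (1-qp)†(1-q) = p(p+q-qp)† if and only if pR ⊕ qR = R (i.e., pR + qR = R and pR ∩ qR = {0}). -/
variable {R : Type*} [Ring R] [StarRing R]

/-!
Write `a = (1-q)p` and `f = 1-qp`, so that `fp = a`. In a *-reducing ring `f h = 0` forces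
`a h = 0`, and this gives `(1-qp)† f a† = a†`; hence `a† = (1-qp)†(1-q)` exactly when
`a a† = 1-q`, i.e. when `1-q ∈ aR`, which is equivalent to `pR + qR = R`. Dually, `a† a = p`
holds exactly when `pR ∩ qR = 0`, and the involution turns the first equivalence into
`a† = p(p+q-qp)† ↔ a† a = p`: it maps `a`, `p+q-qp` to the same expressions `(1-Q)P`, `1-QP`
for the projections `P = 1-q`, `Q = 1-p`. For (3), the common value `x` of
`(1-qp)†(1-q)` and `p(p+q-qp)†` satisfies `a x = 1-q` and `x a = p`.
-/

theorem IsProj.one_sub {p : R} (hp : IsProj p) : IsProj (1 - p) :=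
  ⟨IsIdempotentElem.one_sub hp.1, by rw [star_sub, star_one, hp.2]⟩

omit [StarRing R] in
theorem mem_rid_iff {p x : R} (hp : p * p = p) : x ∈ rid p ↔ p * x = x := by
  constructor
  · rintro ⟨r, rfl⟩
    rw [← mul_assoc, hp]
  · intro h
    exact ⟨x, h.symm⟩

omit [StarRing R] in
theorem sid_rid_eq_univ_iff {p q : R} (hq : q * q = q) :
    sid (rid p) (rid q) = Set.univ ↔ ∃ u, (1 - q) * p * u = 1 - q := by
  constructor
  · intro h
    obtain ⟨_, ⟨u, rfl⟩, _, ⟨v, rfl⟩, hone⟩ : (1 : R) ∈ sid (rid p) (rid q) := h ▸ trivial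
    refine ⟨u, ?_⟩
    calc (1 - q) * p * u = (1 - q) * (p * u + q * v) - (q - q * q) * v := by noncomm_ring
      _ = 1 - q := by rw [← hone, hq, sub_self, zero_mul, sub_zero, mul_one]
  · rintro ⟨u, hu⟩
    refine Set.eq_univ_of_forall fun z =>
      ⟨p * (u * z), ⟨u * z, rfl⟩, q * ((1 - p * u) * z), ⟨(1 - p * u) * z, rfl⟩, ?_⟩
    calc z = ((1 - q) * p * u + q) * z := by rw [hu, sub_add_cancel, one_mul]
      _ = p * (u * z) + q * ((1 - p * u) * z) := by noncomm_ring

omit [StarRing R] in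
theorem inter_rid_eq_zero_of_mul_eq {p q u : R} (hp : p * p = p) (hq : q * q = q)
    (hu : u * ((1 - q) * p) = p) : rid p ∩ rid q = {0} := by
  refine Set.eq_singleton_iff_unique_mem.2 ⟨⟨⟨0, (mul_zero p).symm⟩, ⟨0, (mul_zero q).symm⟩⟩, ?_⟩
  rintro x ⟨hxp, hxq⟩
  rw [mem_rid_iff hp] at hxp
  rw [mem_rid_iff hq] at hxq
  calc x = u * ((1 - q) * p) * x := by rw [hu, hxp]
    _ = u * (p * x - q * (p * x)) := by noncomm_ring
    _ = 0 := by rw [hxp, hxq, sub_self, mul_zero]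

theorem IsProj.mul_eq_self_of_star_mul_eq (hred : ∀ a : R, star a * a = 0 → a = 0) {p x : R}
    (hp : IsProj p) (h : star x * x = star x * (p * x)) : p * x = x := by
  have hpx : star ((1 - p) * x) * ((1 - p) * x) = 0 := by
    rw [star_mul, star_sub, star_one, hp.2]
    calc star x * (1 - p) * ((1 - p) * x) = star x * x - star x * (p * x)
          - (star x * (p * x) - star x * ((p * p) * x)) := by noncomm_ring
      _ = 0 := by rw [hp.1, h]; noncomm_ring
  have := hred _ hpx
  rwa [sub_mul, one_mul, sub_eq_zero, eq_comm] at this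

theorem one_sub_mul_mul_eq_zero (hred : ∀ a : R, star a * a = 0 → a = 0) {p q x : R}
    (hp : IsProj p) (hq : IsProj q) (hx : (1 - q * p) * x = 0) : (1 - q) * p * x = 0 := by
  have hx' : x = q * (p * x) := by
    rw [← sub_eq_zero, ← hx]; noncomm_ring
  have hqx : q * x = x := by
    rw [hx', ← mul_assoc, hq.1]
  have hpx : p * x = x := by
    refine hp.mul_eq_self_of_star_mul_eq hred ?_
    calc star x * x = star x * (q * (p * x)) := by rw [← hx']
      _ = star (q * x) * (p * x) := by rw [star_mul, hq.2, mul_assoc]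
      _ = star x * (p * x) := by rw [hqx]
  rw [mul_assoc, hpx, sub_mul, one_mul, hqx, sub_self]

namespace IsMP

variable {a b : R}

protected theorem star (h : IsMP a b) : IsMP (star a) (star b) := by
  obtain ⟨h₁, h₂, h₃, h₄⟩ := h
  refine ⟨?_, ?_, ?_, ?_⟩
  · rw [← star_mul, ← star_mul, ← mul_assoc, h₁]
  · rw [← star_mul, ← star_mul, ← mul_assoc, h₂]
  · rw [← star_mul, star_star, h₄]
  · rw [← star_mul, star_star, h₃]

theorem star_mul_mul_eq (h : IsMP a b) : star a * (a * b) = star a := by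
  conv_rhs => rw [← h.1, star_mul, h.2.2.1]

theorem star_right_mul_mul_eq (h : IsMP a b) : star b * (b * a) = star b := by
  conv_rhs => rw [← h.2.1, star_mul, h.2.2.2]

theorem star_mul_eq_zero (h : IsMP a b) {x : R} (hx : a * x = 0) : star b * x = 0 := by
  rw [← h.star_right_mul_mul_eq, mul_assoc, mul_assoc, hx, mul_zero, mul_zero]

theorem mul_eq_self_of_mul_eq (h : IsMP a b) {u : R} (hu : a * u = a) (hu' : star u = u) :
    u * b = b := by
  have hba : u * (b * a) = b * a := by
    rw [← hu', ← h.2.2.2, ← star_mul, mul_assoc, hu]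
  conv_lhs => rw [← h.2.1]
  rw [← mul_assoc, hba, h.2.1]

theorem mul_eq_of_mul_eq (h : IsMP a b) {e u : R} (he : star e = e) (hea : e * a = a)
    (hu : a * u = e) : a * b = e := by
  calc a * b = star (e * (a * b)) := by rw [← mul_assoc, hea, h.2.2.1]
    _ = a * b * a * u := by rw [star_mul, h.2.2.1, he, ← hu]; simp only [mul_assoc]
    _ = e := by rw [h.1, hu]

/-- The difference `x = b - c f b` lies in the kernel of `f`, hence of `a`, and `b*`, `c*` kill
these kernels, so `x* x = b* x - b* f* c* x = 0`. -/
theorem mul_mul_eq_of_ker_le (hred : ∀ a : R, star a * a = 0 → a = 0) (h : IsMP a b)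
    {f c : R} (hf : IsMP f c) (hker : ∀ x, f * x = 0 → a * x = 0) : c * (f * b) = b := by
  set x := b - c * (f * b) with hx
  have hfx : f * x = 0 := by
    rw [hx, mul_sub, ← mul_assoc, ← mul_assoc, hf.1, sub_self]
  have hxx : star x * x = 0 := by
    rw [hx, star_sub, sub_mul, h.star_mul_eq_zero (hker x hfx), star_mul, star_mul, mul_assoc,
      mul_assoc, hf.star_mul_eq_zero hfx, mul_zero, mul_zero, sub_zero]
  exact (sub_eq_zero.1 (hred x hxx)).symm

end IsMP

section TwoProjections

variable {p q c d e : R}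

theorem IsProj.mul_mp_eq (hp : IsProj p) (hd : IsMP ((1 - q) * p) d) : p * d = d :=
  hd.mul_eq_self_of_mul_eq (by rw [mul_assoc, hp.1]) hp.2

theorem isMP_one_sub_mul_star (hp : IsProj p) (hq : IsProj q) (he : IsMP (p + q - q * p) e) :
    IsMP (1 - (1 - p) * (1 - q)) (star e) := by
  have h := he.star
  rwa [star_sub, star_add, star_mul, hp.2, hq.2,
    show p + q - p * q = 1 - (1 - p) * (1 - q) by noncomm_ring] at h

/-- With `π = (1-qp)(1-qp)†` we have `(1-q)px = π(1-q)`, so `q` kills `z = (1-π)(1-q)`; so does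
`p(1-q) = p(1-qp)*`, hence `(1-qp)z = z` and `z = πz = 0`. -/
theorem one_sub_mul_mul_eq_one_sub (hp : IsProj p) (hq : IsProj q) (hc : IsMP (1 - q * p) c)
    {x : R} (hx : x = c * (1 - q)) (hpx : p * x = x) : (1 - q) * p * x = 1 - q := by
  have hax : (1 - q) * p * x = (1 - q * p) * c * (1 - q) := by
    calc (1 - q) * p * x = (1 - q * p) * x + (p * x - x) := by noncomm_ring
      _ = (1 - q * p) * c * (1 - q) := by rw [hpx, sub_self, add_zero, hx, mul_assoc]
  set z := (1 - q) - (1 - q * p) * c * (1 - q) with hz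
  have hqz : q * z = 0 := by
    calc q * z = (q - q * q) * (1 - p * x) := by rw [hz, ← hax]; noncomm_ring
      _ = 0 := by rw [hq.1, sub_self, zero_mul]
  have hpz : p * z = 0 := by
    have hstar : p * (1 - q) = p * star (1 - q * p) := by
      rw [star_sub, star_one, star_mul, hp.2, hq.2, mul_sub, mul_sub, ← mul_assoc, hp.1]
    calc p * z = p * (1 - q) * z + p * (q * z) := by noncomm_ring
      _ = p * (star (1 - q * p) * (1 - q))
          - p * (star (1 - q * p) * ((1 - q * p) * c)) * (1 - q) := by
        rw [hqz, hz, hstar]; noncomm_ring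
      _ = 0 := by rw [hc.star_mul_mul_eq]; noncomm_ring
  have hfz : (1 - q * p) * z = z := by
    rw [sub_mul, one_mul, mul_assoc, hpz, mul_zero, sub_zero]
  have hz0 : z = 0 :=
    calc z = (1 - q * p) * c * (1 - q * p) * z := by rw [hc.1, hfz]
      _ = (1 - q * p) * c * z := by rw [mul_assoc _ (1 - q * p), hfz]
      _ = (1 - q * p) * c * (1 - q) - (1 - q * p) * c * (1 - q * p) * c * (1 - q) := by
        rw [hz]; noncomm_ring
      _ = 0 := by rw [hc.1, sub_self]
  rw [hax, ← sub_eq_zero.1 hz0]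

theorem mp_eq_mp_mul_one_sub_iff (hred : ∀ a : R, star a * a = 0 → a = 0) (hp : IsProj p)
    (hq : IsProj q) (hc : IsMP (1 - q * p) c) (hd : IsMP ((1 - q) * p) d) :
    d = c * (1 - q) ↔ (1 - q) * p * d = 1 - q := by
  have hpd := hp.mul_mp_eq hd
  refine ⟨fun h => one_sub_mul_mul_eq_one_sub hp hq hc h hpd, fun h => ?_⟩
  calc d = c * ((1 - q * p) * d) :=
        (hd.mul_mul_eq_of_ker_le hred hc fun _ => one_sub_mul_mul_eq_zero hred hp hq).symm
    _ = c * ((1 - q * p) * (p * d)) := by rw [hpd]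
    _ = c * ((p - q * (p * p)) * d) := by noncomm_ring
    _ = c * (1 - q) := by rw [hp.1, ← h]; noncomm_ring

theorem mp_eq_mul_mp_iff (hred : ∀ a : R, star a * a = 0 → a = 0) (hp : IsProj p)
    (hq : IsProj q) (hd : IsMP ((1 - q) * p) d) (he : IsMP (p + q - q * p) e) :
    d = p * e ↔ d * ((1 - q) * p) = p := by
  have hd' : IsMP ((1 - (1 - p)) * (1 - q)) (star d) := by
    have h := hd.star
    rwa [star_mul, star_sub, star_one, hp.2, hq.2, ← sub_sub_cancel 1 p] at h
  have key := mp_eq_mp_mul_one_sub_iff hred hq.one_sub hp.one_sub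
    (isMP_one_sub_mul_star hp hq he) hd'
  rw [sub_sub_cancel] at key
  calc d = p * e ↔ star d = star e * p := by rw [← star_inj, star_mul, hp.2]
    _ ↔ p * (1 - q) * star d = p := key
    _ ↔ d * ((1 - q) * p) = p := by
      rw [← star_inj, star_mul, star_mul, star_sub, star_one, hp.2, hq.2, star_star]

theorem mul_mp_mul_one_sub_mul_eq (hp : IsProj p) (hq : IsProj q) (he : IsMP (p + q - q * p) e)
    (hx : p * e * (1 - q) = p * e) : p * e * ((1 - q) * p) = p := by
  have h := one_sub_mul_mul_eq_one_sub hq.one_sub hp.one_sub (isMP_one_sub_mul_star hp hq he)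
    (x := star (p * e)) (by rw [sub_sub_cancel, star_mul, hp.2])
    (by rw [← hq.one_sub.2, ← star_mul, hx])
  rw [sub_sub_cancel] at h
  have h' := congrArg star h
  rwa [star_mul, star_star, star_mul, star_sub, star_one, hp.2, hq.2] at h'

theorem mul_mp_eq_one_sub_iff (hq : IsProj q) (hd : IsMP ((1 - q) * p) d) :
    (1 - q) * p * d = 1 - q ↔ sid (rid p) (rid q) = Set.univ := by
  rw [sid_rid_eq_univ_iff hq.1]
  refine ⟨fun h => ⟨d, h⟩, fun ⟨u, hu⟩ => ?_⟩
  exact hd.mul_eq_of_mul_eq hq.one_sub.2 (by rw [← mul_assoc, hq.one_sub.1]) hu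

theorem mp_mul_eq_iff (hp : IsProj p) (hq : IsProj q) (hd : IsMP ((1 - q) * p) d) :
    d * ((1 - q) * p) = p ↔ rid p ∩ rid q = {0} := by
  refine ⟨inter_rid_eq_zero_of_mul_eq hp.1 hq.1, fun h => ?_⟩
  set y := p - d * ((1 - q) * p) with hy
  have hpy : p * y = y := by
    rw [hy, mul_sub, hp.1, ← mul_assoc, hp.mul_mp_eq hd]
  have hqy : q * y = y := by
    refine (sub_eq_zero.1 ?_).symm
    calc y - q * y = (1 - q) * p * y := by rw [mul_assoc, hpy]; noncomm_ring
      _ = (1 - q) * p - (1 - q) * p * d * ((1 - q) * p) := by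
        rw [hy, mul_sub, mul_assoc _ p p, hp.1, ← mul_assoc]
      _ = 0 := by rw [hd.1, sub_self]
  have hy0 : y ∈ rid p ∩ rid q := ⟨(mem_rid_iff hp.1).2 hpy, (mem_rid_iff hq.1).2 hqy⟩
  rw [h] at hy0
  exact (sub_eq_zero.1 hy0).symm

end TwoProjections

theorem stmt18 (hred : ∀ a : R, star a * a = 0 → a = 0)
    (p q c d e : R) (hp : IsProj p) (hq : IsProj q)
    (hc : IsMP (1 - q * p) c) (hd : IsMP ((1 - q) * p) d)
    (he : IsMP (p + q - q * p) e) :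
    (d = c * (1 - q) ↔ sid (rid p) (rid q) = Set.univ) ∧
    (d = p * e ↔ rid p ∩ rid q = {0}) ∧
    (c * (1 - q) = p * e ↔ (sid (rid p) (rid q) = Set.univ ∧ rid p ∩ rid q = {0})) := by
  have h₁ := (mp_eq_mp_mul_one_sub_iff hred hp hq hc hd).trans (mul_mp_eq_one_sub_iff hq hd)
  have h₂ := (mp_eq_mul_mp_iff hred hp hq hd he).trans (mp_mul_eq_iff hp hq hd)
  refine ⟨h₁, h₂, fun h => ?_, fun ⟨hsum, hinter⟩ => by rw [← h₁.2 hsum, ← h₂.2 hinter]⟩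
  have hpx : p * (c * (1 - q)) = c * (1 - q) := by rw [h, ← mul_assoc, hp.1]
  have hxq : p * e * (1 - q) = p * e := by rw [← h, mul_assoc, hq.one_sub.1]
  exact ⟨(sid_rid_eq_univ_iff hq.1).2 ⟨_, one_sub_mul_mul_eq_one_sub hp hq hc rfl hpx⟩,
    inter_rid_eq_zero_of_mul_eq hp.1 hq.1 (mul_mp_mul_one_sub_mul_eq hp hq he hxq)⟩
end
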